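/- arXiv:2410.23719 — 4 statements merged into one kernel-verified Lean document; each statement's English description precedes it below -/
import Mathlib

section
/- Let n ≥ 1 and let D̃ be the noise superoperator built from a Hermitian 2^n×2^n complex matrix H¹ with trace zero and finitely many arbitrary 2^n×2^n complex matrices L₁,…,L_K. Then for any unit vectors φ_a, φ_b ∈ ℂ^{2^n}, the average over all 4^n n-qubit Pauli operators U of the imaginary part of ⟨φ_a, U† · D̃[U (φ_a φ_b†) U†] · U φ_b⟩ equals zero, i.e. (1/4^n) Σ_U Im ⟨φ_a, U† D̃[U |φ_a⟩⟨φ_b| U†] U φ_b⟩ = 0. Here |φ_a⟩⟨φ_b| denotes the outer product matrix φ_a φ_b† and ⟨x, A y⟩ = x† A y. -/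
open Matrix Complex BigOperators

/-- The four single-qubit Pauli matrices I, X, Y, Z. -/
noncomputable def sigma1q : Fin 4 → Matrix (Fin 2) (Fin 2) ℂ :=
  ![!![1, 0; 0, 1], !![0, 1; 1, 0], !![0, -Complex.I; Complex.I, 0], !![1, 0; 0, -1]]

/-- The n-qubit Pauli operator `σ_{s 0} ⊗ ⋯ ⊗ σ_{s (n-1)}`, realized as a matrix
indexed by `Fin n → Fin 2` (entrywise Kronecker product). -/
noncomputable def pauli (n : ℕ) (s : Fin n → Fin 4) :
    Matrix (Fin n → Fin 2) (Fin n → Fin 2) ℂ :=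
  Matrix.of fun i j => ∏ k, sigma1q (s k) (i k) (j k)

/-- The noise superoperator `D̃[ρ] = -i[H¹,ρ] + Σ_k (L_k ρ L_k† - ½{L_k†L_k, ρ})`. -/
noncomputable def noiseSuper {n K : ℕ}
    (H1 : Matrix (Fin n → Fin 2) (Fin n → Fin 2) ℂ)
    (L : Fin K → Matrix (Fin n → Fin 2) (Fin n → Fin 2) ℂ)
    (ρ : Matrix (Fin n → Fin 2) (Fin n → Fin 2) ℂ) :
    Matrix (Fin n → Fin 2) (Fin n → Fin 2) ℂ :=
  (-Complex.I) • (H1 * ρ - ρ * H1) +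
    ∑ k, (L k * ρ * (L k)ᴴ - (1 / 2 : ℂ) • ((L k)ᴴ * L k * ρ)
      - (1 / 2 : ℂ) • (ρ * ((L k)ᴴ * L k)))

/-- The sesquilinear form `⟨x, A y⟩ = x† A y`. -/
noncomputable def sesq {n : ℕ} (x : (Fin n → Fin 2) → ℂ)
    (A : Matrix (Fin n → Fin 2) (Fin n → Fin 2) ℂ) (y : (Fin n → Fin 2) → ℂ) : ℂ :=
  star x ⬝ᵥ (A *ᵥ y)

/-- The outer product `|a⟩⟨b| = a b†`. -/
noncomputable def outer {n : ℕ} (a b : (Fin n → Fin 2) → ℂ) :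
    Matrix (Fin n → Fin 2) (Fin n → Fin 2) ℂ :=
  Matrix.vecMulVec a (star b)

noncomputable def kron {n : ℕ} (A : Fin n → Matrix (Fin 2) (Fin 2) ℂ) :
    Matrix (Fin n → Fin 2) (Fin n → Fin 2) ℂ :=
  Matrix.of fun i j => ∏ k, A k (i k) (j k)

lemma pauli_eq_kron {n : ℕ} (s : Fin n → Fin 4) :
    pauli n s = kron (fun k => sigma1q (s k)) := rfl

lemma sum_fn_prod {n : ℕ} {κ : Type*} [Fintype κ] (f : Fin n → κ → ℂ) :
    ∑ s : Fin n → κ, ∏ m, f m (s m) = ∏ m, ∑ a, f m a := by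
  rw [Finset.prod_univ_sum]
  rw [Fintype.piFinset_univ]

lemma kron_mul {n : ℕ} (A B : Fin n → Matrix (Fin 2) (Fin 2) ℂ) :
    kron A * kron B = kron (fun k => A k * B k) := by
  ext i j
  simp only [kron, Matrix.mul_apply, Matrix.of_apply]
  rw [← sum_fn_prod (fun m c => A m (i m) c * B m c (j m))]
  exact Finset.sum_congr rfl fun k _ => (Finset.prod_mul_distrib).symm

lemma kron_conjTranspose {n : ℕ} (A : Fin n → Matrix (Fin 2) (Fin 2) ℂ) :
    (kron A)ᴴ = kron (fun k => (A k)ᴴ) := by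
  ext i j
  simp only [kron, Matrix.conjTranspose_apply, Matrix.of_apply]
  exact map_prod (starRingEnd ℂ) _ _

lemma kron_smul {n : ℕ} (c : Fin n → ℂ) (A : Fin n → Matrix (Fin 2) (Fin 2) ℂ) :
    kron (fun k => c k • A k) = (∏ k, c k) • kron A := by
  ext i j
  simp [kron, Finset.prod_mul_distrib]

lemma kron_one {n : ℕ} : kron (fun _ : Fin n => (1 : Matrix (Fin 2) (Fin 2) ℂ)) = 1 := by
  ext i j
  simp only [kron, Matrix.of_apply, Matrix.one_apply]
  by_cases h : i = j
  · subst h; simp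
  · rw [if_neg h]
    obtain ⟨m, hm⟩ : ∃ m, i m ≠ j m := by
      by_contra hc; push_neg at hc; exact h (funext hc)
    exact Finset.prod_eq_zero (Finset.mem_univ m) (by simp [Matrix.one_apply, hm])

-- single-qubit facts
lemma sq_herm (a : Fin 4) : (sigma1q a)ᴴ = sigma1q a := by
  fin_cases a <;> ext i j <;> fin_cases i <;> fin_cases j <;>
    simp [sigma1q, Matrix.conjTranspose_apply]

lemma sq_sq (a : Fin 4) : sigma1q a * sigma1q a = 1 := by
  fin_cases a <;> ext i j <;> fin_cases i <;> fin_cases j <;>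
    simp [sigma1q, Matrix.mul_apply, Fin.sum_univ_two, Matrix.one_apply] <;> ring_nf <;>
    simp [Complex.ext_iff]

noncomputable def eps1 : Fin 4 → Fin 4 → ℂ :=
  fun a b => if a = 0 ∨ b = 0 ∨ a = b then 1 else -1

lemma sq_conj_comm (a b : Fin 4) :
    sigma1q a * sigma1q b * sigma1q a = eps1 a b • sigma1q b := by
  fin_cases a <;> fin_cases b <;> ext i j <;> fin_cases i <;> fin_cases j <;>
    simp [sigma1q, eps1, Matrix.mul_apply, Fin.sum_univ_two] <;> ring_nf <;>
    simp [Complex.ext_iff]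

lemma sq_complete (i j k l : Fin 2) :
    ∑ a : Fin 4, sigma1q a i j * sigma1q a k l
      = if k = j ∧ l = i then 2 else 0 := by
  fin_cases i <;> fin_cases j <;> fin_cases k <;> fin_cases l <;>
    simp [sigma1q, Fin.sum_univ_four] <;> ring

lemma eps1_conj (a b : Fin 4) : (starRingEnd ℂ) (eps1 a b) = eps1 a b := by
  unfold eps1; split <;> simp

lemma eps1_orth (b c : Fin 4) :
    ∑ a : Fin 4, eps1 a b * eps1 a c = if b = c then 4 else 0 := by
  fin_cases b <;> fin_cases c <;> simp [eps1, Fin.sum_univ_four] <;> norm_num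

section PauliN
variable {n : ℕ}

lemma pauli_herm (s : Fin n → Fin 4) : (pauli n s)ᴴ = pauli n s := by
  rw [pauli_eq_kron, kron_conjTranspose]
  simp [sq_herm]

lemma pauli_sq (s : Fin n → Fin 4) : pauli n s * pauli n s = 1 := by
  rw [pauli_eq_kron, kron_mul]
  simp [sq_sq, kron_one]

noncomputable def epsn (s t : Fin n → Fin 4) : ℂ := ∏ m, eps1 (s m) (t m)

lemma epsn_conj (s t : Fin n → Fin 4) : (starRingEnd ℂ) (epsn s t) = epsn s t := by
  unfold epsn
  rw [map_prod]
  exact Finset.prod_congr rfl fun m _ => eps1_conj _ _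

lemma pauli_conj_comm (s t : Fin n → Fin 4) :
    pauli n s * pauli n t * pauli n s = epsn s t • pauli n t := by
  simp only [pauli_eq_kron, kron_mul]
  have : (fun k => sigma1q (s k) * sigma1q (t k) * sigma1q (s k))
      = fun k => eps1 (s k) (t k) • sigma1q (t k) := by
    funext k; exact sq_conj_comm _ _
  rw [this, kron_smul]
  rfl

lemma prod_ite_all {p : Fin n → Prop} [DecidablePred p] (c : ℂ) :
    (∏ m, if p m then c else 0) = if (∀ m, p m) then c ^ n else 0 := by
  by_cases h : ∀ m, p m
  · simp [h, Finset.prod_const, Finset.card_univ]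
  · rw [if_neg h]
    push_neg at h
    obtain ⟨m, hm⟩ := h
    exact Finset.prod_eq_zero (Finset.mem_univ m) (by simp [hm])

lemma epsn_orth (t u : Fin n → Fin 4) :
    ∑ s : Fin n → Fin 4, epsn s t * epsn s u = if t = u then 4 ^ n else 0 := by
  unfold epsn
  have : ∀ s : Fin n → Fin 4, (∏ m, eps1 (s m) (t m)) * ∏ m, eps1 (s m) (u m)
      = ∏ m, (eps1 (s m) (t m) * eps1 (s m) (u m)) := fun s =>
    (Finset.prod_mul_distrib).symm
  simp only [this]
  rw [sum_fn_prod (fun m a => eps1 a (t m) * eps1 a (u m))]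
  have : ∀ m, (∑ a : Fin 4, eps1 a (t m) * eps1 a (u m)) = if t m = u m then 4 else 0 :=
    fun m => eps1_orth _ _
  simp only [this]
  rw [prod_ite_all]
  congr 1
  · simp [funext_iff]
  
lemma pauli_complete (i j k l : Fin n → Fin 2) :
    ∑ t : Fin n → Fin 4, pauli n t i j * pauli n t k l
      = if k = j ∧ l = i then 2 ^ n else 0 := by
  unfold pauli
  simp only [Matrix.of_apply]
  have : ∀ t : Fin n → Fin 4, (∏ m, sigma1q (t m) (i m) (j m)) * ∏ m, sigma1q (t m) (k m) (l m)
      = ∏ m, (sigma1q (t m) (i m) (j m) * sigma1q (t m) (k m) (l m)) := fun t =>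
    (Finset.prod_mul_distrib).symm
  simp only [this]
  rw [sum_fn_prod (fun m a => sigma1q a (i m) (j m) * sigma1q a (k m) (l m))]
  simp only [sq_complete]
  rw [prod_ite_all (p := fun m => k m = j m ∧ l m = i m)]
  congr 1
  simp [funext_iff, forall_and]

end PauliN

section Twirl
variable {n : ℕ}

lemma pauli_twirl (M : Matrix (Fin n → Fin 2) (Fin n → Fin 2) ℂ) :
    ∑ s : Fin n → Fin 4, pauli n s * M * pauli n s = ((2:ℂ) ^ n * M.trace) • 1 := by
  ext i j
  simp only [Matrix.sum_apply, Matrix.mul_apply, Matrix.smul_apply, Matrix.one_apply,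
    Finset.sum_mul, Finset.mul_sum]
  -- LHS: ∑ s ∑ l ∑ k, pauli s i k * M k l * pauli s l j
  rw [Finset.sum_comm]
  -- now ∑ l ∑ s ∑ k
  have step : ∀ l, (∑ s : Fin n → Fin 4, ∑ k, pauli n s i k * M k l * pauli n s l j)
      = ∑ k, M k l * (if l = k ∧ j = i then 2 ^ n else 0) := by
    intro l
    rw [Finset.sum_comm]
    refine Finset.sum_congr rfl fun k _ => ?_
    rw [← pauli_complete i k l j, Finset.mul_sum]
    exact Finset.sum_congr rfl fun s _ => by ring
  simp only [step]
  by_cases h : j = i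
  · subst h
    simp only [and_true, smul_eq_mul, if_true, mul_one, eq_self_iff_true]
    rw [Matrix.trace, Finset.mul_sum]
    refine Finset.sum_congr rfl fun y _ => ?_
    rw [Finset.sum_eq_single y] <;> simp_all [Matrix.diag, mul_comm, eq_comm]
  · simp only [h, and_false, if_false, if_neg h, mul_zero, Finset.sum_const_zero, smul_zero]
    simp [if_neg (fun hh : i = j => h hh.symm)]

end Twirl

lemma pauli_expand {n : ℕ} (M : Matrix (Fin n → Fin 2) (Fin n → Fin 2) ℂ) :
    (2:ℂ) ^ n • M = ∑ t : Fin n → Fin 4, (pauli n t * M).trace • pauli n t := by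
  ext i j
  simp only [Matrix.sum_apply, Matrix.smul_apply, smul_eq_mul, Matrix.trace,
    Matrix.diag, Matrix.mul_apply]
  -- RHS: ∑ t, (∑ k ∑ l, pauli t k l * M l k) * pauli t i j
  have step : ∀ t : Fin n → Fin 4,
      (∑ k, ∑ l, pauli n t k l * M l k) * pauli n t i j
        = ∑ k, ∑ l, M l k * (pauli n t k l * pauli n t i j) := by
    intro t
    rw [Finset.sum_mul]
    refine Finset.sum_congr rfl fun k _ => ?_
    rw [Finset.sum_mul]
    exact Finset.sum_congr rfl fun l _ => by ring
  simp only [step]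
  rw [Finset.sum_comm]
  have step2 : ∀ k, (∑ t : Fin n → Fin 4, ∑ l, M l k * (pauli n t k l * pauli n t i j))
      = ∑ l, M l k * (if i = l ∧ j = k then 2 ^ n else 0) := by
    intro k
    rw [Finset.sum_comm]
    refine Finset.sum_congr rfl fun l _ => ?_
    rw [← pauli_complete k l i j, Finset.mul_sum]
  simp only [step2]
  simp [ite_and, Finset.sum_ite_eq, mul_comm]

section Form
variable {n : ℕ}

noncomputable def form (x y : (Fin n → Fin 2) → ℂ) :
    Matrix (Fin n → Fin 2) (Fin n → Fin 2) ℂ →ₗ[ℂ] ℂ where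
  toFun M := star x ⬝ᵥ M *ᵥ y
  map_add' M N := by simp [Matrix.add_mulVec]
  map_smul' c M := by simp [Matrix.smul_mulVec]

lemma form_one (x y : (Fin n → Fin 2) → ℂ) : form x y 1 = star x ⬝ᵥ y := by
  simp [form]

lemma form_conj (x y : (Fin n → Fin 2) → ℂ) (M : Matrix (Fin n → Fin 2) (Fin n → Fin 2) ℂ) :
    (starRingEnd ℂ) (form x y M) = form y x Mᴴ := by
  simp only [form, LinearMap.coe_mk, AddHom.coe_mk, dotProduct, Matrix.mulVec,
    Matrix.conjTranspose_apply, map_sum, _root_.map_mul, Pi.star_apply,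
    Finset.mul_sum]
  rw [Finset.sum_comm]
  refine Finset.sum_congr rfl fun i _ => Finset.sum_congr rfl fun j _ => ?_
  simp only [RCLike.star_def, RingHom.coe_coe]
  rw [starRingEnd_self_apply]
  ring

lemma form_herm_im (x : (Fin n → Fin 2) → ℂ) {M : Matrix (Fin n → Fin 2) (Fin n → Fin 2) ℂ}
    (hM : Mᴴ = M) : (form x x M).im = 0 := by
  have h := form_conj x x M
  rw [hM] at h
  have := Complex.conj_eq_iff_im.mp h
  exact this

lemma form_outer (x y a b : (Fin n → Fin 2) → ℂ)
    (A B : Matrix (Fin n → Fin 2) (Fin n → Fin 2) ℂ) :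
    form x y (A * Matrix.vecMulVec a (star b) * B)
      = form x a A * form b y B := by
  simp only [form, LinearMap.coe_mk, AddHom.coe_mk]
  rw [← Matrix.mulVec_mulVec, ← Matrix.mulVec_mulVec]
  have : Matrix.vecMulVec a (star b) *ᵥ (B *ᵥ y) = (star b ⬝ᵥ (B *ᵥ y)) • a := by
    ext i
    simp only [Matrix.vecMulVec_apply, Matrix.mulVec, dotProduct, Pi.smul_apply,
      Finset.sum_mul, Finset.mul_sum, smul_eq_mul, Pi.star_apply]
    refine Finset.sum_congr rfl fun k _ => Finset.sum_congr rfl fun l _ => by ring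
  rw [this, Matrix.mulVec_smul, dotProduct_smul, smul_eq_mul]
  ring

lemma key_char_sum {n : ℕ} (f g : (Fin n → Fin 4) → ℂ) :
    ∑ s : Fin n → Fin 4, (∑ t, f t * epsn s t) * (∑ u, g u * epsn s u)
      = 4 ^ n * ∑ t, f t * g t := by
  have expand : ∀ s : Fin n → Fin 4,
      (∑ t, f t * epsn s t) * (∑ u, g u * epsn s u)
        = ∑ t, ∑ u, (f t * g u) * (epsn s t * epsn s u) := by
    intro s
    rw [Finset.sum_mul_sum]
    exact Finset.sum_congr rfl fun t _ => Finset.sum_congr rfl fun u _ => by ring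
  simp only [expand]
  rw [Finset.sum_comm]
  have step : ∀ t, (∑ s : Fin n → Fin 4, ∑ u, f t * g u * (epsn s t * epsn s u))
      = ∑ u, f t * g u * (if t = u then (4:ℂ) ^ n else 0) := by
    intro t
    rw [Finset.sum_comm]
    refine Finset.sum_congr rfl fun u _ => ?_
    rw [← epsn_orth t u, Finset.mul_sum]
  simp only [step, mul_ite, mul_zero, Finset.sum_ite_eq]
  simp only [Finset.mem_univ, if_true, Finset.mul_sum]
  exact Finset.sum_congr rfl fun t _ => by ring

lemma Q_im_zero {n : ℕ} (x y : (Fin n → Fin 2) → ℂ)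
    (L : Matrix (Fin n → Fin 2) (Fin n → Fin 2) ℂ) :
    (∑ s : Fin n → Fin 4,
      form x x (pauli n s * L * pauli n s)
        * form y y ((pauli n s * L * pauli n s)ᴴ)).im = 0 := by
  set c : (Fin n → Fin 4) → ℂ := fun t => (pauli n t * L).trace with hc
  set fa : (Fin n → Fin 4) → ℂ := fun t => form x x (pauli n t) with hfa
  set fb : (Fin n → Fin 4) → ℂ := fun t => form y y (pauli n t) with hfb
  have h1 : ∀ s, (2:ℂ) ^ n • (pauli n s * L * pauli n s)
      = ∑ t, (c t * epsn s t) • pauli n t := by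
    intro s
    calc (2:ℂ) ^ n • (pauli n s * L * pauli n s)
        = pauli n s * ((2:ℂ) ^ n • L) * pauli n s := by
          rw [Matrix.mul_smul, Matrix.smul_mul]
      _ = pauli n s * (∑ t, c t • pauli n t) * pauli n s := by rw [pauli_expand L]
      _ = ∑ t, c t • (pauli n s * pauli n t * pauli n s) := by
          rw [Finset.mul_sum, Finset.sum_mul]
          exact Finset.sum_congr rfl fun t _ => by
            rw [Matrix.mul_smul, Matrix.smul_mul]
      _ = ∑ t, (c t * epsn s t) • pauli n t := by
          refine Finset.sum_congr rfl fun t _ => ?_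
          rw [pauli_conj_comm, smul_smul]
  have h2 : ∀ s, (2:ℂ) ^ n * form x x (pauli n s * L * pauli n s)
      = ∑ t, (c t * fa t) * epsn s t := by
    intro s
    have := congrArg (form x x) (h1 s)
    rw [_root_.map_smul, map_sum] at this
    simp only [_root_.map_smul, smul_eq_mul] at this
    rw [this]
    exact Finset.sum_congr rfl fun t _ => by rw [hfa]; ring
  have h3 : ∀ s, (2:ℂ) ^ n * form y y ((pauli n s * L * pauli n s)ᴴ)
      = ∑ t, ((starRingEnd ℂ) (c t * fb t)) * epsn s t := by
    intro s
    have hconj : form y y ((pauli n s * L * pauli n s)ᴴ)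
        = (starRingEnd ℂ) (form y y (pauli n s * L * pauli n s)) := by
      rw [form_conj]
    rw [hconj]
    have h2b : (2:ℂ) ^ n * form y y (pauli n s * L * pauli n s)
        = ∑ t, (c t * fb t) * epsn s t := by
      have := congrArg (form y y) (h1 s)
      rw [_root_.map_smul, map_sum] at this
      simp only [_root_.map_smul, smul_eq_mul] at this
      rw [this]
      exact Finset.sum_congr rfl fun t _ => by rw [hfb]; ring
    have := congrArg (starRingEnd ℂ) h2b
    rw [_root_.map_mul, map_sum] at this
    have h2n : (starRingEnd ℂ) ((2:ℂ) ^ n) = (2:ℂ) ^ n := by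
      rw [map_pow, Complex.conj_ofNat]
    rw [h2n] at this
    rw [this]
    refine Finset.sum_congr rfl fun t _ => ?_
    rw [_root_.map_mul, epsn_conj]
  -- multiply the sum by 4^n
  set S := ∑ s : Fin n → Fin 4,
      form x x (pauli n s * L * pauli n s) * form y y ((pauli n s * L * pauli n s)ᴴ) with hS
  have hmain : (4:ℂ) ^ n * S
      = 4 ^ n * ∑ t, (c t * fa t) * ((starRingEnd ℂ) (c t * fb t)) := by
    have h4 : (4:ℂ) ^ n = (2:ℂ) ^ n * (2:ℂ) ^ n := by
      rw [← mul_pow]; norm_num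
    rw [hS, h4, Finset.mul_sum]
    have : ∀ s, (2:ℂ) ^ n * (2:ℂ) ^ n *
        (form x x (pauli n s * L * pauli n s) * form y y ((pauli n s * L * pauli n s)ᴴ))
        = (∑ t, (c t * fa t) * epsn s t) * (∑ u, ((starRingEnd ℂ) (c u * fb u)) * epsn s u) := by
      intro s
      rw [← h2, ← h3]; ring
    simp only [this]
    rw [key_char_sum]
    rw [h4]
  -- imaginary parts
  have him : (∑ t, (c t * fa t) * ((starRingEnd ℂ) (c t * fb t))).im = 0 := by
    rw [Complex.im_sum]
    refine Finset.sum_eq_zero fun t _ => ?_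
    have hfaim : (fa t).im = 0 := form_herm_im x (pauli_herm t)
    have hfbim : (fb t).im = 0 := form_herm_im y (pauli_herm t)
    have : (c t * fa t) * ((starRingEnd ℂ) (c t * fb t))
        = (c t * (starRingEnd ℂ) (c t)) * (fa t * (starRingEnd ℂ) (fb t)) := by
      rw [_root_.map_mul]; ring
    rw [this]
    have h1' : (c t * (starRingEnd ℂ) (c t)).im = 0 := by
      rw [Complex.mul_conj]; simp
    have h2' : (fa t * (starRingEnd ℂ) (fb t)).im = 0 := by
      rw [Complex.mul_im]
      simp [hfaim, Complex.conj_im, hfbim]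
    rw [Complex.mul_im, h1', h2']
    ring
  have h4c : ((4:ℂ) ^ n) = (((4:ℝ) ^ n : ℝ) : ℂ) := by norm_cast
  have him4 : ((4:ℂ) ^ n).im = 0 := by rw [h4c, Complex.ofReal_im]
  have hre4 : ((4:ℂ) ^ n).re = (4:ℝ) ^ n := by rw [h4c, Complex.ofReal_re]
  have : ((4:ℂ) ^ n * S).im = (4:ℝ) ^ n * S.im := by
    rw [Complex.mul_im, him4, hre4]; ring
  rw [hmain] at this
  have hz : ((4:ℂ) ^ n * ∑ t, (c t * fa t) * ((starRingEnd ℂ) (c t * fb t))).im = 0 := by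
    rw [Complex.mul_im, him4, him]; ring
  rw [hz] at this
  have h4pos : (0:ℝ) < 4 ^ n := by positivity
  have := this.symm
  exact (mul_eq_zero.mp this).resolve_left (by positivity)

end Form

section Asm
variable {n : ℕ}

lemma sandAB (P X Y ρ : Matrix (Fin n → Fin 2) (Fin n → Fin 2) ℂ) :
    P * (X * (P * ρ * P) * Y) * P = (P * X * P) * ρ * (P * Y * P) := by
  simp only [← mul_assoc]

lemma sandR {P : Matrix (Fin n → Fin 2) (Fin n → Fin 2) ℂ} (hP : P * P = 1)
    (X ρ : Matrix (Fin n → Fin 2) (Fin n → Fin 2) ℂ) :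
    P * (X * (P * ρ * P)) * P = (P * X * P) * ρ * 1 := by
  have : P * (X * (P * ρ * P)) * P = (P * X * P) * ρ * (P * P) := by
    simp only [mul_assoc]
  rw [this, hP]

lemma sandL {P : Matrix (Fin n → Fin 2) (Fin n → Fin 2) ℂ} (hP : P * P = 1)
    (X ρ : Matrix (Fin n → Fin 2) (Fin n → Fin 2) ℂ) :
    P * ((P * ρ * P) * X) * P = 1 * ρ * (P * X * P) := by
  have : P * ((P * ρ * P) * X) * P = (P * P) * ρ * (P * X * P) := by
    simp only [mul_assoc]
  rw [this, hP]

end Asm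


set_option maxHeartbeats 1000000 in
lemma hval_test {n K : ℕ}
    (H1 : Matrix (Fin n → Fin 2) (Fin n → Fin 2) ℂ)
    (L : Fin K → Matrix (Fin n → Fin 2) (Fin n → Fin 2) ℂ)
    (φa φb : (Fin n → Fin 2) → ℂ)
    (ha : star φa ⬝ᵥ φa = 1) (hb : star φb ⬝ᵥ φb = 1)
    (s : Fin n → Fin 4) :
      sesq φa ((pauli n s)ᴴ * noiseSuper H1 L (pauli n s * outer φa φb * (pauli n s)ᴴ) * pauli n s) φb
      = -Complex.I * (form φa φa (pauli n s * H1 * pauli n s)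
            - form φb φb (pauli n s * H1 * pauli n s))
        + ∑ k, (form φa φa (pauli n s * L k * pauli n s)
              * form φb φb ((pauli n s * L k * pauli n s)ᴴ)
            - (1/2 : ℂ) * form φa φa (pauli n s * ((L k)ᴴ * L k) * pauli n s)
            - (1/2 : ℂ) * form φb φb (pauli n s * ((L k)ᴴ * L k) * pauli n s)) := by
  set ρ := outer φa φb with hρ0
  have hρ : ρ = Matrix.vecMulVec φa (star φb) := rfl
  set P := pauli n s with hP'
  have hP : P * P = 1 := pauli_sq s
  have hPh : Pᴴ = P := pauli_herm s
  have hAH : ∀ k, (P * L k * P)ᴴ = P * (L k)ᴴ * P := by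
    intro k
    simp only [Matrix.conjTranspose_mul, hPh, Matrix.mul_assoc]
  have hsesq : sesq φa (Pᴴ * noiseSuper H1 L (P * ρ * Pᴴ) * P) φb
      = form φa φb (P * noiseSuper H1 L (P * ρ * P) * P) := by
    rw [hPh]; rfl
  rw [hsesq]
  have hcomm : form φa φb (P * ((-Complex.I) • (H1 * (P * ρ * P) - (P * ρ * P) * H1)) * P)
      = -Complex.I * (form φa φa (P * H1 * P) - form φb φb (P * H1 * P)) := by
    rw [Matrix.mul_smul, Matrix.smul_mul, _root_.map_smul]
    rw [Matrix.mul_sub, Matrix.sub_mul, map_sub]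
    rw [sandR hP H1 ρ, sandL hP H1 ρ]
    have h1 : form φa φb ((P * H1 * P) * ρ * 1) = form φa φa (P * H1 * P) := by
      rw [hρ, form_outer, form_one, hb, mul_one]
    have h2 : form φa φb (1 * ρ * (P * H1 * P)) = form φb φb (P * H1 * P) := by
      rw [hρ, form_outer, form_one, ha, one_mul]
    rw [h1, h2, smul_eq_mul]
  have hlin : ∀ k : Fin K, form φa φb (P * (L k * (P * ρ * P) * (L k)ᴴ
        - (1/2 : ℂ) • ((L k)ᴴ * L k * (P * ρ * P))
        - (1/2 : ℂ) • ((P * ρ * P) * ((L k)ᴴ * L k))) * P)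
      = form φa φa (P * L k * P) * form φb φb ((P * L k * P)ᴴ)
        - (1/2 : ℂ) * form φa φa (P * ((L k)ᴴ * L k) * P)
        - (1/2 : ℂ) * form φb φb (P * ((L k)ᴴ * L k) * P) := by
    intro k
    rw [Matrix.mul_sub, Matrix.sub_mul, map_sub, Matrix.mul_sub, Matrix.sub_mul, map_sub]
    rw [Matrix.mul_smul, Matrix.smul_mul, _root_.map_smul,
        Matrix.mul_smul, Matrix.smul_mul, _root_.map_smul]
    rw [sandAB P (L k) ((L k)ᴴ) ρ, sandR hP ((L k)ᴴ * L k) ρ, sandL hP ((L k)ᴴ * L k) ρ]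
    have h1 : form φa φb ((P * L k * P) * ρ * (P * (L k)ᴴ * P))
        = form φa φa (P * L k * P) * form φb φb ((P * L k * P)ᴴ) := by
      rw [hρ, form_outer, hAH]
    have h2 : form φa φb ((P * ((L k)ᴴ * L k) * P) * ρ * 1)
        = form φa φa (P * ((L k)ᴴ * L k) * P) := by
      rw [hρ, form_outer, form_one, hb, mul_one]
    have h3 : form φa φb (1 * ρ * (P * ((L k)ᴴ * L k) * P))
        = form φb φb (P * ((L k)ᴴ * L k) * P) := by
      rw [hρ, form_outer, form_one, ha, one_mul]
    rw [h1, h2, h3, smul_eq_mul, smul_eq_mul]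
  rw [noiseSuper, Matrix.mul_add, Matrix.add_mul, map_add, hcomm,
      Finset.mul_sum, Finset.sum_mul, map_sum]
  congr 1
  exact Finset.sum_congr rfl fun k _ => hlin k


set_option maxHeartbeats 1000000 in
/-- Averaging over all `4^n` n-qubit Pauli operators `U`, the imaginary part of
`⟨φ_a, U† D̃[U |φ_a⟩⟨φ_b| U†] U φ_b⟩` vanishes. -/
theorem pauli_average_noise_im_eq_zero {n K : ℕ} (hn : 1 ≤ n)
    (H1 : Matrix (Fin n → Fin 2) (Fin n → Fin 2) ℂ)
    (hH1 : H1.IsHermitian) (htr : H1.trace = 0)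
    (L : Fin K → Matrix (Fin n → Fin 2) (Fin n → Fin 2) ℂ)
    (φa φb : (Fin n → Fin 2) → ℂ)
    (ha : star φa ⬝ᵥ φa = 1) (hb : star φb ⬝ᵥ φb = 1) :
    (1 / 4 ^ n : ℝ) *
      ∑ s : Fin n → Fin 4,
        (sesq φa ((pauli n s)ᴴ *
          noiseSuper H1 L (pauli n s * outer φa φb * (pauli n s)ᴴ) * pauli n s) φb).im
      = 0 := by
  suffices h : (∑ s : Fin n → Fin 4,
        (sesq φa ((pauli n s)ᴴ *
          noiseSuper H1 L (pauli n s * outer φa φb * (pauli n s)ᴴ) * pauli n s) φb).im)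
      = 0 by rw [h, mul_zero]
  rw [← Complex.im_sum]
  have hsplit : (∑ s : Fin n → Fin 4,
        sesq φa ((pauli n s)ᴴ *
          noiseSuper H1 L (pauli n s * outer φa φb * (pauli n s)ᴴ) * pauli n s) φb)
      = (∑ s : Fin n → Fin 4, -Complex.I *
            (form φa φa (pauli n s * H1 * pauli n s) - form φb φb (pauli n s * H1 * pauli n s)))
        + ∑ s : Fin n → Fin 4, ∑ k,
            (form φa φa (pauli n s * L k * pauli n s)
              * form φb φb ((pauli n s * L k * pauli n s)ᴴ)
            - (1/2 : ℂ) * form φa φa (pauli n s * ((L k)ᴴ * L k) * pauli n s)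
            - (1/2 : ℂ) * form φb φb (pauli n s * ((L k)ᴴ * L k) * pauli n s)) := by
    rw [← Finset.sum_add_distrib]
    exact Finset.sum_congr rfl fun s _ => hval_test H1 L φa φb ha hb s
  rw [hsplit]
  have hGsum : (∑ s : Fin n → Fin 4, pauli n s * H1 * pauli n s) = 0 := by
    rw [pauli_twirl H1, htr, mul_zero, zero_smul]
  have hfirst : (∑ s : Fin n → Fin 4, -Complex.I *
      (form φa φa (pauli n s * H1 * pauli n s) - form φb φb (pauli n s * H1 * pauli n s))) = 0 := by
    rw [← Finset.mul_sum]
    have : (∑ s : Fin n → Fin 4,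
        (form φa φa (pauli n s * H1 * pauli n s) - form φb φb (pauli n s * H1 * pauli n s))) = 0 := by
      rw [Finset.sum_sub_distrib, ← map_sum, ← map_sum, hGsum, map_zero, map_zero, sub_zero]
    rw [this, mul_zero]
  rw [hfirst, zero_add]
  rw [Finset.sum_comm, Complex.im_sum]
  refine Finset.sum_eq_zero fun k _ => ?_
  have hsplit2 : (∑ s : Fin n → Fin 4,
      (form φa φa (pauli n s * L k * pauli n s) * form φb φb ((pauli n s * L k * pauli n s)ᴴ)
        - (1/2 : ℂ) * form φa φa (pauli n s * ((L k)ᴴ * L k) * pauli n s)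
        - (1/2 : ℂ) * form φb φb (pauli n s * ((L k)ᴴ * L k) * pauli n s)))
      = (∑ s : Fin n → Fin 4,
          form φa φa (pauli n s * L k * pauli n s) * form φb φb ((pauli n s * L k * pauli n s)ᴴ))
        - (1/2 : ℂ) * (∑ s : Fin n → Fin 4, form φa φa (pauli n s * ((L k)ᴴ * L k) * pauli n s))
        - (1/2 : ℂ) * (∑ s : Fin n → Fin 4, form φb φb (pauli n s * ((L k)ᴴ * L k) * pauli n s)) := by
    rw [Finset.mul_sum, Finset.mul_sum, ← Finset.sum_sub_distrib, ← Finset.sum_sub_distrib]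
  rw [hsplit2]
  have hQ := Q_im_zero φa φb (L k)
  have hBherm : ∀ s : Fin n → Fin 4,
      (pauli n s * ((L k)ᴴ * L k) * pauli n s)ᴴ = pauli n s * ((L k)ᴴ * L k) * pauli n s := by
    intro s
    simp only [Matrix.conjTranspose_mul, pauli_herm, Matrix.conjTranspose_conjTranspose,
      Matrix.mul_assoc]
  have hRa : (∑ s : Fin n → Fin 4, form φa φa (pauli n s * ((L k)ᴴ * L k) * pauli n s)).im = 0 := by
    rw [Complex.im_sum]
    exact Finset.sum_eq_zero fun s _ => form_herm_im φa (hBherm s)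
  have hRb : (∑ s : Fin n → Fin 4, form φb φb (pauli n s * ((L k)ᴴ * L k) * pauli n s)).im = 0 := by
    rw [Complex.im_sum]
    exact Finset.sum_eq_zero fun s _ => form_herm_im φb (hBherm s)
  have hhalf : ∀ z : ℂ, z.im = 0 → ((1/2 : ℂ) * z).im = 0 := by
    intro z hz
    rw [Complex.mul_im, hz]
    norm_num
  rw [Complex.sub_im, Complex.sub_im, hQ, hhalf _ hRa, hhalf _ hRb]
  ring
end

section
/- Let n ≥ 1 and let D̃ be the noise superoperator built from matrices H¹ and L₁,…,L_K of size 2^n×2^n, where H¹ is Hermitian and anticommutes with X^{⊗n} (i.e. H¹ X^{⊗n} + X^{⊗n} H¹ = 0), and each Lindblad operator satisfies L_k† = X^{⊗n} L_k X^{⊗n}. Then for any unit vectors φ_a, φ_b ∈ ℂ^{2^n}, averaging over the two-element set G = {I^{⊗n}, X^{⊗n}} gives (1/2) Σ_{U ∈ G} Im ⟨φ_a, U† D̃[U |φ_a⟩⟨φ_b| U†] U φ_b⟩ = 0. -/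
open Matrix Complex BigOperators

/-! ### Auxiliary lemmas -/

lemma sigma1q_one_apply (a b : Fin 2) : sigma1q 1 a b = if b = a + 1 then 1 else 0 := by
  fin_cases a <;> fin_cases b <;> simp [sigma1q]

lemma pauliX_apply {n : ℕ} (i j : Fin n → Fin 2) :
    pauli n (fun _ => 1) i j = if j = (fun k => i k + 1) then 1 else 0 := by
  simp only [pauli, Matrix.of_apply, sigma1q_one_apply]
  rw [Finset.prod_boole]
  simp [funext_iff]

lemma pauliX_mul_self {n : ℕ} : pauli n (fun _ => 1) * pauli n (fun _ => 1) = 1 := by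
  ext i j
  simp only [Matrix.mul_apply, pauliX_apply, ite_mul, one_mul, zero_mul,
    Finset.sum_ite_eq' Finset.univ]
  simp only [Finset.mem_univ, if_true]
  have h2 : (fun k => (i k + 1) + 1) = i := by funext k; omega
  rw [h2, Matrix.one_apply]
  by_cases h : j = i
  · simp [h]
  · rw [if_neg h, if_neg (fun hh => h hh.symm)]

lemma pauliX_conjTranspose {n : ℕ} : (pauli n (fun _ => 1))ᴴ = pauli n (fun _ => 1) := by
  ext i j
  simp only [Matrix.conjTranspose_apply, pauliX_apply]
  have hiff : (i = fun k => j k + 1) ↔ (j = fun k => i k + 1) := by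
    constructor <;> intro h <;> funext k <;> have := congrFun h k <;> omega
  by_cases h : j = fun k => i k + 1
  · rw [if_pos (hiff.mpr h), if_pos h]; simp
  · rw [if_neg (fun hh => h (hiff.mp hh)), if_neg h]; simp

section sesqLemmas
variable {n : ℕ} {x y a b : (Fin n → Fin 2) → ℂ} {A B : Matrix (Fin n → Fin 2) (Fin n → Fin 2) ℂ}

lemma sesq_add : sesq x (A + B) y = sesq x A y + sesq x B y := by
  simp [sesq, Matrix.add_mulVec, dotProduct_add]

lemma sesq_sub : sesq x (A - B) y = sesq x A y - sesq x B y := by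
  simp [sesq, Matrix.sub_mulVec, dotProduct_sub]

lemma sesq_smul (c : ℂ) : sesq x (c • A) y = c * sesq x A y := by
  simp [sesq, Matrix.smul_mulVec, dotProduct_smul, smul_eq_mul]

lemma sesq_sum {K : ℕ} (f : Fin K → Matrix (Fin n → Fin 2) (Fin n → Fin 2) ℂ) :
    sesq x (∑ k, f k) y = ∑ k, sesq x (f k) y := by
  have hmv : (∑ k, f k) *ᵥ y = ∑ k, f k *ᵥ y := by
    ext i
    simp only [mulVec, dotProduct, Matrix.sum_apply, Finset.sum_mul, Finset.sum_apply]
    exact Finset.sum_comm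
  simp only [sesq, hmv, dotProduct, Finset.sum_apply, Finset.mul_sum]
  exact Finset.sum_comm

lemma sesq_conjTranspose : sesq x Aᴴ y = starRingEnd ℂ (sesq y A x) := by
  simp only [sesq, dotProduct, mulVec, Matrix.conjTranspose_apply,
    Finset.mul_sum, map_sum, _root_.map_mul, Pi.star_apply, starRingEnd_apply, star_star]
  rw [Finset.sum_comm]
  apply Finset.sum_congr rfl; intro i _
  apply Finset.sum_congr rfl; intro j _
  ring

lemma sesq_mul_outer_mul : sesq x (A * outer a b * B) y = sesq x A a * sesq b B y := by
  have h : A * outer a b * B = vecMulVec (A *ᵥ a) (star b ᵥ* B) := by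
    ext i j
    simp only [outer, Matrix.mul_apply, vecMulVec_apply, mulVec, vecMul, dotProduct,
      Finset.sum_mul, Finset.mul_sum, Pi.star_apply]
    apply Finset.sum_congr rfl; intro p _
    apply Finset.sum_congr rfl; intro q _
    ring
  have hv : ∀ (u v : (Fin n → Fin 2) → ℂ),
      star x ⬝ᵥ (vecMulVec u v *ᵥ y) = (star x ⬝ᵥ u) * (v ⬝ᵥ y) := by
    intro u v
    simp only [mulVec, dotProduct, vecMulVec_apply, Pi.star_apply]
    rw [Finset.sum_mul_sum]
    apply Finset.sum_congr rfl; intro i _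
    rw [Finset.mul_sum]
    apply Finset.sum_congr rfl; intro j _
    ring
  rw [h]
  show star x ⬝ᵥ _ = _
  rw [hv]
  congr 1
  rw [sesq, Matrix.dotProduct_mulVec]

lemma sesq_one : sesq x (1 : Matrix (Fin n → Fin 2) (Fin n → Fin 2) ℂ) y = star x ⬝ᵥ y := by
  simp [sesq]

lemma sesq_mul_outer : sesq x (A * outer a b) y = sesq x A a * (star b ⬝ᵥ y) := by
  have := sesq_mul_outer_mul (x := x) (A := A) (a := a) (b := b) (B := (1 : Matrix _ _ ℂ)) (y := y)
  rw [Matrix.mul_one] at this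
  rw [this, sesq_one]

lemma sesq_outer_mul : sesq x (outer a b * B) y = (star x ⬝ᵥ a) * sesq b B y := by
  have := sesq_mul_outer_mul (x := x) (A := (1 : Matrix _ _ ℂ)) (a := a) (b := b) (B := B) (y := y)
  rw [Matrix.one_mul] at this
  rw [this, sesq_one]

lemma sesq_self_im_zero (h : Aᴴ = A) : (sesq x A x).im = 0 := by
  have h1 : sesq x Aᴴ x = starRingEnd ℂ (sesq x A x) := sesq_conjTranspose
  rw [h] at h1
  exact Complex.conj_eq_iff_im.mp h1.symm

end sesqLemmas

/-- If `H¹` anticommutes with `X^{⊗n}` and every Lindblad operator satisfies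
`L_k† = X^{⊗n} L_k X^{⊗n}`, then averaging over `G = {I^{⊗n}, X^{⊗n}}` cancels the
first-order noise contribution to the estimated phase. -/
theorem reshaping_IX_average_noise_im_eq_zero {n K : ℕ} (hn : 1 ≤ n)
    (H1 : Matrix (Fin n → Fin 2) (Fin n → Fin 2) ℂ) (hH1 : H1.IsHermitian)
    (hanti : H1 * pauli n (fun _ => 1) + pauli n (fun _ => 1) * H1 = 0)
    (L : Fin K → Matrix (Fin n → Fin 2) (Fin n → Fin 2) ℂ)
    (hL : ∀ k, (L k)ᴴ = pauli n (fun _ => 1) * L k * pauli n (fun _ => 1))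
    (φa φb : (Fin n → Fin 2) → ℂ)
    (ha : star φa ⬝ᵥ φa = 1) (hb : star φb ⬝ᵥ φb = 1) :
    (1 / 2 : ℝ) *
      ∑ i : Fin 2,
        (sesq φa
          ((![1, pauli n (fun _ => 1)] i)ᴴ *
            noiseSuper H1 L
              (![1, pauli n (fun _ => 1)] i * outer φa φb * (![1, pauli n (fun _ => 1)] i)ᴴ) *
            ![1, pauli n (fun _ => 1)] i) φb).im
      = 0 := by
  set X := pauli n (fun _ => 1) with hXdef
  set ρ := outer φa φb with hρdef
  have hX2 : X * X = 1 := pauliX_mul_self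
  have hXH : Xᴴ = X := pauliX_conjTranspose
  have h2l : ∀ A : Matrix (Fin n → Fin 2) (Fin n → Fin 2) ℂ, X * (X * A) = A := fun A => by
    rw [← Matrix.mul_assoc, hX2, Matrix.one_mul]
  have hXHX : X * H1 * X = -H1 := by
    have e : H1 * X = -(X * H1) := eq_neg_of_add_eq_zero_left hanti
    rw [Matrix.mul_assoc, e, Matrix.mul_neg, h2l]
  have hXLX : ∀ k, X * L k * X = (L k)ᴴ := fun k => (hL k).symm
  have hXLHX : ∀ k, X * (L k)ᴴ * X = L k := by
    intro k
    rw [hL k]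
    simp only [Matrix.mul_assoc, h2l]
    rw [hX2, Matrix.mul_one]
  -- conjugation helpers
  have cA1 : ∀ A : Matrix (Fin n → Fin 2) (Fin n → Fin 2) ℂ,
      X * (A * (X * ρ * X)) * X = (X * A * X) * ρ := by
    intro A; simp only [Matrix.mul_assoc, hX2, Matrix.mul_one]
  have cA2 : ∀ A : Matrix (Fin n → Fin 2) (Fin n → Fin 2) ℂ,
      X * ((X * ρ * X) * A) * X = ρ * (X * A * X) := by
    intro A; simp only [Matrix.mul_assoc, h2l]
  have conj3 : ∀ A B : Matrix (Fin n → Fin 2) (Fin n → Fin 2) ℂ,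
      X * (A * (X * ρ * X) * B) * X = (X * A * X) * ρ * (X * B * X) := by
    intro A B; simp only [Matrix.mul_assoc]
  have cC : ∀ C D : Matrix (Fin n → Fin 2) (Fin n → Fin 2) ℂ,
      X * (C * D * (X * ρ * X)) * X = (X * C * X) * ((X * D * X) * ρ) := by
    intro C D; simp only [Matrix.mul_assoc, hX2, Matrix.mul_one, h2l]
  have cD : ∀ C D : Matrix (Fin n → Fin 2) (Fin n → Fin 2) ℂ,
      X * ((X * ρ * X) * (C * D)) * X = ρ * ((X * C * X) * (X * D * X)) := by
    intro C D; simp only [Matrix.mul_assoc, hX2, Matrix.mul_one, h2l]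
  -- the key conjugated-noise identity
  have key : X * noiseSuper H1 L (X * ρ * X) * X
      = Complex.I • (H1 * ρ - ρ * H1)
        + ∑ k, ((L k)ᴴ * ρ * L k - (1 / 2 : ℂ) • (L k * ((L k)ᴴ * ρ))
            - (1 / 2 : ℂ) • (ρ * (L k * (L k)ᴴ))) := by
    rw [noiseSuper]
    rw [Matrix.mul_add, Matrix.add_mul, mul_smul_comm, smul_mul_assoc,
      Finset.mul_sum, Finset.sum_mul]
    congr 1
    · rw [Matrix.mul_sub, Matrix.sub_mul, cA1, cA2, hXHX]
      rw [Matrix.neg_mul, Matrix.mul_neg]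
      rw [show -(H1 * ρ) - -(ρ * H1) = -(H1 * ρ - ρ * H1) by abel]
      rw [smul_neg, neg_smul, neg_neg]
    · apply Finset.sum_congr rfl; intro k _
      rw [Matrix.mul_sub, Matrix.sub_mul, Matrix.mul_sub, Matrix.sub_mul,
        mul_smul_comm, smul_mul_assoc, mul_smul_comm, smul_mul_assoc,
        conj3, cC, cD, hXLX k, hXLHX k]
  -- reduce the Fin 2 sum
  rw [Fin.sum_univ_two]
  simp only [Matrix.cons_val_zero, Matrix.cons_val_one, Matrix.head_cons,
    Matrix.conjTranspose_one, Matrix.one_mul, Matrix.mul_one, hXH]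
  rw [key]
  rw [noiseSuper]
  -- expand the two sesq values
  rw [sesq_add, sesq_add, sesq_smul, sesq_smul, sesq_sum, sesq_sum]
  have himp : ∀ t u v : ℂ, (-Complex.I * t + u).im + (Complex.I * t + v).im = u.im + v.im := by
    intro t u v
    simp only [Complex.add_im, Complex.mul_im, Complex.neg_re, Complex.neg_im, Complex.I_re,
      Complex.I_im]
    ring
  rw [himp]
  rw [Complex.im_sum, Complex.im_sum, ← Finset.sum_add_distrib]
  rw [show (0 : ℝ) = (1/2 : ℝ) * ∑ k : Fin K, (0 : ℝ) by simp]
  congr 1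
  apply Finset.sum_congr rfl; intro k _
  have half_im : ∀ u : ℂ, ((1/2 : ℂ) * u).im = (1/2 : ℝ) * u.im := by
    intro u
    simp [Complex.mul_im]
  rw [← Matrix.mul_assoc (L k) ((L k)ᴴ) ρ]
  rw [sesq_sub, sesq_sub, sesq_sub, sesq_sub, sesq_smul, sesq_smul, sesq_smul, sesq_smul]
  rw [hρdef]
  rw [sesq_mul_outer_mul, sesq_mul_outer_mul, sesq_mul_outer, sesq_mul_outer,
    sesq_outer_mul, sesq_outer_mul, ha, hb]
  rw [show sesq φb (L k)ᴴ φb = starRingEnd ℂ (sesq φb (L k) φb) from sesq_conjTranspose]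
  rw [show sesq φa (L k)ᴴ φa = starRingEnd ℂ (sesq φa (L k) φa) from sesq_conjTranspose]
  have hq1 : (sesq φa ((L k)ᴴ * L k) φa).im = 0 :=
    sesq_self_im_zero (by simp [Matrix.conjTranspose_mul])
  have hq2 : (sesq φb ((L k)ᴴ * L k) φb).im = 0 :=
    sesq_self_im_zero (by simp [Matrix.conjTranspose_mul])
  have hq3 : (sesq φa (L k * (L k)ᴴ) φa).im = 0 :=
    sesq_self_im_zero (by simp [Matrix.conjTranspose_mul])
  have hq4 : (sesq φb (L k * (L k)ᴴ) φb).im = 0 :=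
    sesq_self_im_zero (by simp [Matrix.conjTranspose_mul])
  have pair : (sesq φa (L k) φa * starRingEnd ℂ (sesq φb (L k) φb)).im
      + (starRingEnd ℂ (sesq φa (L k) φa) * sesq φb (L k) φb).im = 0 := by
    have h : starRingEnd ℂ (sesq φa (L k) φa) * sesq φb (L k) φb
        = starRingEnd ℂ (sesq φa (L k) φa * starRingEnd ℂ (sesq φb (L k) φb)) := by
      rw [_root_.map_mul, Complex.conj_conj]
    rw [h, Complex.conj_im]
    ring
  simp only [Complex.sub_im, half_im, mul_one, one_mul, hq1, hq2, hq3, hq4]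
  linarith [pair]
end

section
/- Second-order Hamiltonian-rescaling error cancellation: let E, A, B ∈ ℝ and let c₁, c₂ ∈ ℝ with c₁ ≠ c₂, c₁ ≠ 0, c₂ ≠ 0, c₁ ≠ 1, c₂ ≠ 1. Define Ê⁽⁰⁾ = E + A + B, Ê⁽¹⁾ = E/c₁ + A + c₁ B, and Ê⁽²⁾ = E/c₂ + A + c₂ B. Then c₁ c₂ · ((1 - c₂)(Ê⁽¹⁾ - Ê⁽⁰⁾) + (c₁ - 1)(Ê⁽²⁾ - Ê⁽⁰⁾)) / ((c₂ - c₁)(c₁ - 1)(c₂ - 1)) = E. -/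
/-- Second-order Hamiltonian-rescaling error cancellation: with
`Ê⁽⁰⁾ = E + A + B`, `Ê⁽¹⁾ = E/c₁ + A + c₁B`, `Ê⁽²⁾ = E/c₂ + A + c₂B`, the combination
`c₁c₂((1-c₂)(Ê⁽¹⁾-Ê⁽⁰⁾) + (c₁-1)(Ê⁽²⁾-Ê⁽⁰⁾)) / ((c₂-c₁)(c₁-1)(c₂-1))` recovers `E`. -/
theorem rescaling_second_order (E A B c₁ c₂ : ℝ)
    (hne : c₁ ≠ c₂) (hc₁0 : c₁ ≠ 0) (hc₂0 : c₂ ≠ 0) (hc₁1 : c₁ ≠ 1) (hc₂1 : c₂ ≠ 1)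
    (E0 E1 E2 : ℝ) (hE0 : E0 = E + A + B)
    (hE1 : E1 = E / c₁ + A + c₁ * B) (hE2 : E2 = E / c₂ + A + c₂ * B) :
    c₁ * c₂ * ((1 - c₂) * (E1 - E0) + (c₁ - 1) * (E2 - E0)) /
      ((c₂ - c₁) * (c₁ - 1) * (c₂ - 1)) = E := by
  subst hE0 hE1 hE2
  rw [div_eq_iff (by
    intro h
    rcases mul_eq_zero.1 h with h | h
    · rcases mul_eq_zero.1 h with h | h
      · exact hne (by linarith [sub_eq_zero.1 h])
      · exact hc₁1 (sub_eq_zero.1 h)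
    · exact hc₂1 (sub_eq_zero.1 h))]
  field_simp
  ring
end

section
/- Ordering of the error-amplification prefactors in Hamiltonian rescaling: for all real numbers c₁ > c₂ > 1, defining F(c₁,c₂) = √((c₁ - c₂)² + (c₁ - 1)² + (c₂ - 1)²) / ((1/c₂ - 1/c₁)(c₁ - 1)(c₂ - 1)), one has F(c₁,c₂) > √2 · c₂/(c₂ - 1) > √2 · c₁/(c₁ - 1) > √2. -/
/-! Writing the denominator as `(c₁ - c₂)(c₁ - 1)(c₂ - 1)/(c₁ c₂)`, the first inequality becomes
`√2 · ab/c₁ < √(a² + b² + (c₂ - 1)²)` with `a = c₁ - c₂` and `b = c₁ - 1`; this follows from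
`a² + b² ≥ 2ab` and `(ab/c₁)² < ab`, the latter because `a, b < c₁`. The other two inequalities
say that `c ↦ c/(c - 1) = 1 + 1/(c - 1)` decreases on `(1, ∞)` and stays above `1`. -/

lemma sq_mul_div_lt_mul {a b c : ℝ} (ha : 0 < a) (hb : 0 < b) (hac : a < c) (hbc : b < c) :
    (a * b / c) ^ 2 < a * b := by
  have hc : 0 < c := ha.trans hac
  rw [div_pow, div_lt_iff₀ (by positivity), pow_two, pow_two]
  exact mul_lt_mul_of_pos_left (mul_lt_mul'' hac hbc ha.le hb.le) (mul_pos ha hb)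

lemma sqrt_two_mul_mul_div_lt_sqrt {a b c : ℝ} (d : ℝ) (ha : 0 < a) (hb : 0 < b) (hac : a < c)
    (hbc : b < c) : √2 * (a * b / c) < √(a ^ 2 + b ^ 2 + d ^ 2) := by
  have hc : 0 < c := ha.trans hac
  rw [Real.lt_sqrt (by positivity), mul_pow, Real.sq_sqrt zero_le_two]
  nlinarith [sq_mul_div_lt_mul ha hb hac hbc, sq_nonneg (a - b), sq_nonneg d]

lemma mul_div_sub_one_mul_one_div_sub_one_div {c₁ c₂ : ℝ} (x : ℝ) (hc₁ : c₁ ≠ 0) (hc₂ : c₂ ≠ 0)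
    (hc₂₁ : c₂ - 1 ≠ 0) :
    x * c₂ / (c₂ - 1) * ((1 / c₂ - 1 / c₁) * (c₁ - 1) * (c₂ - 1))
      = x * ((c₁ - c₂) * (c₁ - 1) / c₁) := by
  field_simp

lemma div_sub_one_lt_div_sub_one {c₁ c₂ : ℝ} (h₂ : 1 < c₂) (h₁₂ : c₂ < c₁) :
    c₁ / (c₁ - 1) < c₂ / (c₂ - 1) := by
  rw [div_lt_div_iff₀ (by linarith) (by linarith)]
  linarith

lemma one_lt_div_sub_one {c : ℝ} (hc : 1 < c) : 1 < c / (c - 1) := by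
  rw [one_lt_div (by linarith)]
  linarith

/-- Ordering of the error-amplification prefactors in Hamiltonian rescaling: for
`c₁ > c₂ > 1`, `F(c₁,c₂) > √2 c₂/(c₂-1) > √2 c₁/(c₁-1) > √2`, where
`F(c₁,c₂) = √((c₁-c₂)² + (c₁-1)² + (c₂-1)²) / ((1/c₂ - 1/c₁)(c₁-1)(c₂-1))`. -/
theorem rescaling_prefactor_ordering (c₁ c₂ : ℝ) (h₂ : 1 < c₂) (h₁₂ : c₂ < c₁) :
    Real.sqrt ((c₁ - c₂) ^ 2 + (c₁ - 1) ^ 2 + (c₂ - 1) ^ 2) /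
        ((1 / c₂ - 1 / c₁) * (c₁ - 1) * (c₂ - 1))
      > Real.sqrt 2 * c₂ / (c₂ - 1) ∧
    Real.sqrt 2 * c₂ / (c₂ - 1) > Real.sqrt 2 * c₁ / (c₁ - 1) ∧
    Real.sqrt 2 * c₁ / (c₁ - 1) > Real.sqrt 2 := by
  have h₁ : 1 < c₁ := h₂.trans h₁₂
  have hc₁ : 0 < c₁ := one_pos.trans h₁
  have hc₂ : 0 < c₂ := one_pos.trans h₂
  have hD : 0 < (1 / c₂ - 1 / c₁) * (c₁ - 1) * (c₂ - 1) :=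
    mul_pos (mul_pos (sub_pos.mpr (one_div_lt_one_div_of_lt hc₂ h₁₂)) (sub_pos.mpr h₁))
      (sub_pos.mpr h₂)
  refine ⟨?_, ?_, ?_⟩
  · rw [gt_iff_lt, lt_div_iff₀ hD, mul_div_sub_one_mul_one_div_sub_one_div _ hc₁.ne' hc₂.ne'
      (sub_pos.mpr h₂).ne']
    exact sqrt_two_mul_mul_div_lt_sqrt _ (sub_pos.mpr h₁₂) (sub_pos.mpr h₁) (by linarith)
      (by linarith)
  · simp only [mul_div_assoc]
    exact mul_lt_mul_of_pos_left (div_sub_one_lt_div_sub_one h₂ h₁₂) (by positivity)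
  · rw [mul_div_assoc]
    exact lt_mul_of_one_lt_right (by positivity) (one_lt_div_sub_one h₁)
end
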